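/- (Non-decomposition.) There is no *-term P such that se(P) can be decomposed as X[△↦Y] with X ∈ T_{A,△} and Y ∈ T_A, where X ≠ △, X contains the leaf △, and X contains neither the leaf T nor the leaf F. -/

import Mathlib

/-- Evaluation trees over a set `A` of atoms, with leaves `T` and `F`. -/
inductive ETree (A : Type) : Type
  | leafT : ETree A
  | leafF : ETree A
  | node : ETree A → A → ETree A → ETree A

namespace ETree

/-- Leaf replacement `X[T↦Y, F↦Z]`. -/
def repl {A : Type} : ETree A → ETree A → ETree A → ETree A
  | leafT, y, _ => y
  | leafF, _, z => z
  | node l a r, y, z => node (repl l y z) a (repl r y z)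

end ETree

namespace ETree

/-- The tree contains the leaf `T`. -/
def hasT {A : Type} : ETree A → Prop
  | leafT => True
  | leafF => False
  | node l _ r => hasT l ∨ hasT r

/-- The tree contains the leaf `F`. -/
def hasF {A : Type} : ETree A → Prop
  | leafT => False
  | leafF => True
  | node l _ r => hasF l ∨ hasF r

end ETree

/-- Closed sequential propositional statements over `A`:
`P ::= a | T | F | ¬P | P ∧❛ P | P ∨❛ P`. -/
inductive STerm (A : Type) : Type
  | atom : A → STerm A
  | tt : STerm A
  | ff : STerm A
  | neg : STerm A → STerm A
  | and : STerm A → STerm A → STerm A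
  | or : STerm A → STerm A → STerm A

/-- The short-circuit evaluation function `se : S_A → T_A`. -/
def se {A : Type} : STerm A → ETree A
  | .tt => .leafT
  | .ff => .leafF
  | .atom a => .node .leafT a .leafF
  | .neg P => (se P).repl .leafF .leafT
  | .and P Q => (se P).repl (se Q) .leafF
  | .or P Q => (se P).repl .leafT (se Q)

/-- T-terms: `P^T ::= T | (a ∧❛ P^T) ∨❛ P^T`. -/
inductive IsTTerm {A : Type} : STerm A → Prop
  | tt : IsTTerm .tt
  | node (a : A) {P Q} : IsTTerm P → IsTTerm Q → IsTTerm (.or (.and (.atom a) P) Q)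

/-- F-terms: `P^F ::= F | (a ∨❛ P^F) ∧❛ P^F`. -/
inductive IsFTerm {A : Type} : STerm A → Prop
  | ff : IsFTerm .ff
  | node (a : A) {P Q} : IsFTerm P → IsFTerm Q → IsFTerm (.and (.or (.atom a) P) Q)

/-- ℓ-terms: `P^ℓ ::= (a ∧❛ P^T) ∨❛ P^F | (¬a ∧❛ P^T) ∨❛ P^F`. -/
inductive IsLTerm {A : Type} : STerm A → Prop
  | pos (a : A) {P Q} : IsTTerm P → IsFTerm Q → IsLTerm (.or (.and (.atom a) P) Q)
  | neg (a : A) {P Q} : IsTTerm P → IsFTerm Q → IsLTerm (.or (.and (.neg (.atom a)) P) Q)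

mutual
/-- The category `P^c ::= P^ℓ | P^* ∧❛ P^d`. -/
inductive IsCTerm {A : Type} : STerm A → Prop
  | ell {P} : IsLTerm P → IsCTerm P
  | and {P Q} : IsStarTerm P → IsDTerm Q → IsCTerm (.and P Q)

/-- The category `P^d ::= P^ℓ | P^* ∨❛ P^c`. -/
inductive IsDTerm {A : Type} : STerm A → Prop
  | ell {P} : IsLTerm P → IsDTerm P
  | or {P Q} : IsStarTerm P → IsCTerm Q → IsDTerm (.or P Q)

/-- *-terms: `P^* ::= P^c | P^d`. -/
inductive IsStarTerm {A : Type} : STerm A → Prop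
  | c {P} : IsCTerm P → IsStarTerm P
  | d {P} : IsDTerm P → IsStarTerm P
end

/-- Binary trees over `A` with leaves in `{T, F, △}`. -/
inductive DTree (A : Type) : Type
  | leafT : DTree A
  | leafF : DTree A
  | leafD : DTree A
  | node : DTree A → A → DTree A → DTree A

namespace DTree

/-- `X[△↦Z]`: replace every `△`-leaf of `X` by the evaluation tree `Z`. -/
def substD {A : Type} : DTree A → ETree A → ETree A
  | leafT, _ => .leafT
  | leafF, _ => .leafF
  | leafD, z => z
  | node l a r, z => .node (substD l z) a (substD r z)

/-- The tree contains the leaf `T`. -/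
def hasT {A : Type} : DTree A → Prop
  | leafT => True
  | leafF => False
  | leafD => False
  | node l _ r => hasT l ∨ hasT r

/-- The tree contains the leaf `F`. -/
def hasF {A : Type} : DTree A → Prop
  | leafT => False
  | leafF => True
  | leafD => False
  | node l _ r => hasF l ∨ hasF r

/-- The tree contains the leaf `△`. -/
def hasD {A : Type} : DTree A → Prop
  | leafT => False
  | leafF => False
  | leafD => True
  | node l _ r => hasD l ∨ hasD r

end DTree

/-!
A tree `X[△↦Y]` with `X ≠ △` built from `△`-leaves only is a node both of whose subtrees
contain exactly the leaf kinds of `Y`. For an ℓ-term the two subtrees of `se P` are a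
T-only and an F-only tree, so this is impossible. For `P ∧❛ Q` the tree `se P[T↦se Q]` is
handled by lifting: since `se Q` contains `T` it is not a proper subtree of its own images,
so `U ↦ U[T↦se Q]` is injective; hence the copies of `Y` in a decomposition of `se P[T↦se Q]`
all come from one tree `V`, giving a decomposition of `se P`. Dually for `P ∨❛ Q`.
-/

section

variable {A : Type}

namespace DTree

theorem hasT_substD_iff {X : DTree A} (hT : ¬X.hasT) (hF : ¬X.hasF) (Y : ETree A) :
    (X.substD Y).hasT ↔ Y.hasT := by
  induction X with
  | leafT => exact hT.elim trivial
  | leafF => exact hF.elim trivial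
  | leafD => rfl
  | node l a r ihl ihr =>
    simp only [hasT, hasF, not_or] at hT hF
    simp only [substD, ETree.hasT, ihl hT.1 hF.1, ihr hT.2 hF.2, or_self]

end DTree

namespace ETree

def Decomposable (Z : ETree A) : Prop :=
  ∃ (X : DTree A) (Y : ETree A), Z = X.substD Y ∧ X ≠ .leafD ∧ ¬X.hasT ∧ ¬X.hasF

theorem hasT_repl (U C D : ETree A) :
    (U.repl C D).hasT ↔ U.hasT ∧ C.hasT ∨ U.hasF ∧ D.hasT := by
  induction U with
  | leafT | leafF => simp [repl, hasT, hasF]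
  | node l a r ihl ihr => simp only [repl, hasT, hasF, ihl, ihr]; tauto

theorem hasF_repl (U C D : ETree A) :
    (U.repl C D).hasF ↔ U.hasT ∧ C.hasF ∨ U.hasF ∧ D.hasF := by
  induction U with
  | leafT | leafF => simp [repl, hasT, hasF]
  | node l a r ihl ihr => simp only [repl, hasF, hasT, ihl, ihr]; tauto

theorem sizeOf_le_sizeOf_repl_left {U : ETree A} (C D : ETree A) (hU : U.hasT) :
    sizeOf C ≤ sizeOf (U.repl C D) := by
  induction U with
  | leafT => exact le_rfl
  | leafF => exact hU.elim
  | node l a r ihl ihr =>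
    simp only [repl, node.sizeOf_spec]
    rcases hU with hl | hr
    · have := ihl hl; omega
    · have := ihr hr; omega

theorem sizeOf_le_sizeOf_repl_right {U : ETree A} (C D : ETree A) (hU : U.hasF) :
    sizeOf D ≤ sizeOf (U.repl C D) := by
  induction U with
  | leafT => exact hU.elim
  | leafF => exact le_rfl
  | node l a r ihl ihr =>
    simp only [repl, node.sizeOf_spec]
    rcases hU with hl | hr
    · have := ihl hl; omega
    · have := ihr hr; omega

theorem repl_node_ne_left {C D : ETree A} (hC : C.hasT) (hD : ¬D.hasT) (l r : ETree A) (a : A) :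
    (node l a r).repl C D ≠ C := by
  intro h
  have hT : (node l a r).hasT := by
    have := h ▸ hC
    rw [hasT_repl] at this
    exact (this.resolve_right fun h => hD h.2).1
  have hle : sizeOf C ≤ sizeOf (l.repl C D) ∨ sizeOf C ≤ sizeOf (r.repl C D) :=
    hT.imp (sizeOf_le_sizeOf_repl_left C D) (sizeOf_le_sizeOf_repl_left C D)
  have hsize := congrArg sizeOf h
  simp only [repl, node.sizeOf_spec] at hsize
  omega

theorem repl_node_ne_right {C D : ETree A} (hD : D.hasF) (hC : ¬C.hasF) (l r : ETree A) (a : A) :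
    (node l a r).repl C D ≠ D := by
  intro h
  have hF : (node l a r).hasF := by
    have := h ▸ hD
    rw [hasF_repl] at this
    exact (this.resolve_left fun h => hC h.2).1
  have hle : sizeOf D ≤ sizeOf (l.repl C D) ∨ sizeOf D ≤ sizeOf (r.repl C D) :=
    hF.imp (sizeOf_le_sizeOf_repl_right C D) (sizeOf_le_sizeOf_repl_right C D)
  have hsize := congrArg sizeOf h
  simp only [repl, node.sizeOf_spec] at hsize
  omega

theorem repl_injective {C D : ETree A} (hCD : C ≠ D)
    (hC : ∀ l r a, (node l a r).repl C D ≠ C) (hD : ∀ l r a, (node l a r).repl C D ≠ D) :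
    Function.Injective fun U : ETree A => U.repl C D := by
  intro U V h
  dsimp only at h
  induction U generalizing V with
  | leafT =>
    cases V with
    | leafT => rfl
    | leafF => exact absurd h hCD
    | node l a r => exact absurd h.symm (hC l r a)
  | leafF =>
    cases V with
    | leafT => exact absurd h.symm hCD
    | leafF => rfl
    | node l a r => exact absurd h.symm (hD l r a)
  | node l a r ihl ihr =>
    cases V with
    | leafT => exact absurd h (hC l r a)
    | leafF => exact absurd h (hD l r a)
    | node l' a' r' =>
      simp only [repl, node.injEq] at h
      obtain ⟨hl, rfl, hr⟩ := h
      rw [ihl hl, ihr hr]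

theorem repl_leafF_injective {C : ETree A} (hC : C.hasT) :
    Function.Injective fun U : ETree A => U.repl C leafF :=
  repl_injective (by rintro rfl; exact hC) (repl_node_ne_left hC id) (fun _ _ _ => nofun)

theorem leafT_repl_injective {D : ETree A} (hD : D.hasF) :
    Function.Injective fun U : ETree A => U.repl leafT D :=
  repl_injective (by rintro rfl; exact hD) (fun _ _ _ => nofun) (repl_node_ne_right hD id)

theorem not_decomposable_node {L R : ETree A} (h : ¬(L.hasT ↔ R.hasT)) (a : A) :
    ¬(node L a R).Decomposable := by
  rintro ⟨X, Y, hXY, hX, hT, hF⟩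
  cases X with
  | leafT => exact hT trivial
  | leafF => exact hF trivial
  | leafD => exact hX rfl
  | node Xl b Xr =>
    simp only [DTree.hasT, DTree.hasF, not_or] at hT hF
    simp only [DTree.substD, node.injEq] at hXY
    obtain ⟨rfl, -, rfl⟩ := hXY
    rw [DTree.hasT_substD_iff hT.1 hF.1, DTree.hasT_substD_iff hT.2 hF.2] at h
    exact h Iff.rfl

theorem exists_substD_of_repl_eq_substD {C D : ETree A}
    (hinj : Function.Injective fun U : ETree A => U.repl C D)
    (hC : ¬C.Decomposable) (hD : ¬D.Decomposable) {X : DTree A} (hT : ¬X.hasT) (hF : ¬X.hasF)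
    {U Y : ETree A} (h : U.repl C D = X.substD Y) :
    ∃ V, U = X.substD V ∧ Y = V.repl C D := by
  induction X generalizing U with
  | leafT => exact hT.elim trivial
  | leafF => exact hF.elim trivial
  | leafD => exact ⟨U, rfl, h.symm⟩
  | node Xl b Xr ihl ihr =>
    have hX : ¬(DTree.node Xl b Xr).hasT ∧ ¬(DTree.node Xl b Xr).hasF := ⟨hT, hF⟩
    simp only [DTree.hasT, DTree.hasF, not_or] at hT hF
    cases U with
    | leafT => exact (hC ⟨_, Y, h, nofun, hX⟩).elim
    | leafF => exact (hD ⟨_, Y, h, nofun, hX⟩).elim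
    | node Ul a Ur =>
      simp only [repl, DTree.substD, node.injEq] at h
      obtain ⟨hl, rfl, hr⟩ := h
      obtain ⟨Vl, rfl, rfl⟩ := ihl hT.1 hF.1 hl
      obtain ⟨Vr, rfl, hV⟩ := ihr hT.2 hF.2 hr
      obtain rfl := hinj hV
      exact ⟨Vl, rfl, rfl⟩

theorem not_decomposable_repl {U C D : ETree A} (hU : ¬U.Decomposable)
    (hinj : Function.Injective fun U : ETree A => U.repl C D)
    (hC : ¬C.Decomposable) (hD : ¬D.Decomposable) :
    ¬(U.repl C D).Decomposable := by
  rintro ⟨X, Y, h, hX, hT, hF⟩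
  obtain ⟨V, rfl, -⟩ := exists_substD_of_repl_eq_substD hinj hC hD hT hF h
  exact hU ⟨X, V, rfl, hX, hT, hF⟩

theorem not_decomposable_leafT : ¬(leafT : ETree A).Decomposable := by
  rintro ⟨X, Y, h, hX, hT, hF⟩
  cases X <;> first | exact hT trivial | exact hF trivial | exact hX rfl | cases h

theorem not_decomposable_leafF : ¬(leafF : ETree A).Decomposable := by
  rintro ⟨X, Y, h, hX, hT, hF⟩
  cases X <;> first | exact hT trivial | exact hF trivial | exact hX rfl | cases h

end ETree

open ETree

theorem IsTTerm.se_hasT_not_hasF {P : STerm A} (h : IsTTerm P) : (se P).hasT ∧ ¬(se P).hasF := by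
  induction h with
  | tt => simp [se, hasT, hasF]
  | node a _ _ ihP ihQ => simp_all [se, repl, hasT, hasF, hasF_repl]

theorem IsFTerm.se_hasF_not_hasT {P : STerm A} (h : IsFTerm P) : (se P).hasF ∧ ¬(se P).hasT := by
  induction h with
  | ff => simp [se, hasT, hasF]
  | node a _ _ ihP ihQ => simp_all [se, repl, hasT, hasF, hasT_repl]

namespace IsLTerm

variable {P : STerm A}

theorem se_hasT (h : IsLTerm P) : (se P).hasT := by
  rcases h with ⟨a, hP, -⟩ | ⟨a, hP, -⟩ <;>
    simp [se, repl, hasT, hasT_repl, hP.se_hasT_not_hasF.1]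

theorem se_hasF (h : IsLTerm P) : (se P).hasF := by
  rcases h with ⟨a, hP, hQ⟩ | ⟨a, hP, hQ⟩ <;>
    simp [se, repl, hasF, hasF_repl, hP.se_hasT_not_hasF.1, hQ.se_hasF_not_hasT.1]

theorem not_decomposable_se (h : IsLTerm P) : ¬(se P).Decomposable := by
  rcases h with ⟨a, hP, hQ⟩ | ⟨a, hP, hQ⟩ <;>
  · simp only [se, repl]
    apply not_decomposable_node
    simp [hasT, hasT_repl, hP.se_hasT_not_hasF.1, hQ.se_hasF_not_hasT.2]

end IsLTerm

@[elab_as_elim]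
theorem IsStarTerm.induction {motive : STerm A → Prop}
    (ell : ∀ P, IsLTerm P → motive P)
    (and : ∀ P Q, IsStarTerm P → IsStarTerm Q → motive P → motive Q → motive (.and P Q))
    (or : ∀ P Q, IsStarTerm P → IsStarTerm Q → motive P → motive Q → motive (.or P Q))
    {P : STerm A} (h : IsStarTerm P) : motive P := by
  induction P with
  | and P Q ihP ihQ =>
    obtain (⟨⟨⟩⟩ | ⟨hP, hQ⟩) | (⟨⟨⟩⟩ | ⟨⟩) := h
    exact and P Q hP (.d hQ) (ihP hP) (ihQ (.d hQ))
  | or P Q ihP ihQ =>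
    obtain (⟨hl⟩ | ⟨⟩) | (⟨hl⟩ | ⟨hP, hQ⟩) := h
    · exact ell _ hl
    · exact ell _ hl
    · exact or P Q hP (.c hQ) (ihP hP) (ihQ (.c hQ))
  | atom | tt | ff | neg => obtain (⟨⟨⟩⟩ | ⟨⟩) | (⟨⟨⟩⟩ | ⟨⟩) := h

namespace IsStarTerm

variable {P : STerm A}

theorem se_hasT_and_hasF (h : IsStarTerm P) : (se P).hasT ∧ (se P).hasF :=
  IsStarTerm.induction (fun _ hP => ⟨hP.se_hasT, hP.se_hasF⟩)
    (fun _ _ _ _ ihP ihQ => by simp [se, hasT_repl, hasF_repl, hasF, ihP, ihQ.1])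
    (fun _ _ _ _ ihP ihQ => by simp [se, hasT_repl, hasF_repl, hasT, ihP, ihQ.2]) h

theorem not_decomposable_se (h : IsStarTerm P) : ¬(se P).Decomposable := by
  refine IsStarTerm.induction (fun P hP => hP.not_decomposable_se)
    (fun P Q _ hQ ihP ihQ => ?_) (fun P Q _ hQ ihP ihQ => ?_) h
  · exact not_decomposable_repl ihP (repl_leafF_injective (se_hasT_and_hasF hQ).1)
      ihQ not_decomposable_leafF
  · exact not_decomposable_repl ihP (leafT_repl_injective (se_hasT_and_hasF hQ).2)
      not_decomposable_leafT ihQ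

end IsStarTerm

end

/-- Non-decomposition: no *-term `P` admits a decomposition `se(P) = X[△↦Y]` with
`X ≠ △`, `X` containing `△` but containing neither `T` nor `F`. -/
theorem non_decomposition {A : Type} [Nonempty A] :
    ¬ ∃ (P : STerm A) (X : DTree A) (Y : ETree A),
        IsStarTerm P ∧ se P = X.substD Y ∧ X ≠ DTree.leafD ∧
        X.hasD ∧ ¬ X.hasT ∧ ¬ X.hasF := by
  rintro ⟨P, X, Y, hP, hXY, hX, -, hT, hF⟩
  exact hP.not_decomposable_se ⟨X, Y, hXY, hX, hT, hF⟩
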